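/- Let (M,d) be a metric space and μ a Borel measure on M such that V(x,r) := μ(B(x,r)) is finite and strictly positive for all x ∈ M and r > 0, and suppose there exists a constant C_μ > 0 such that V(x,2r) ≤ C_μ V(x,r) for all x ∈ M and r > 0. Let β ≥ 2, let 0 < γ₁ < 1 and γ₂ > 1, set α₁ = γ₁ β and α₂ = γ₂ β, and define ν(s) = s^{-1-γ₁} for 0 < s ≤ 1 and ν(s) = s^{-1-γ₂} for s > 1. Suppose q : (0,∞) × M × M → [0,∞) is measurable and satisfies, for all u > 0 and x, y ∈ M, c₁ (1/V(x, u^{1/β})) exp( - c₂ (d(x,y)^β/u)^{1/(β-1)} ) ≤ q(u,x,y) ≤ c₃ (1/V(x, u^{1/β})) exp( - c₄ (d(x,y)^β/u)^{1/(β-1)} ), with constants c₁, c₂, c₃, c₄ > 0. Define J(x,y) = ∫₀^∞ q(u,x,y) ν(u) du for x ≠ y. Then there exist constants C₁, C₂ > 0 such that C₁ / ( V(x, d(x,y)) d(x,y)^{α₁} ) ≤ J(x,y) ≤ C₂ / ( V(x, d(x,y)) d(x,y)^{α₁} ) whenever 0 < d(x,y) ≤ 1, and C₁ / ( V(x, d(x,y))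 d(x,y)^{α₂} ) ≤ J(x,y) ≤ C₂ / ( V(x, d(x,y)) d(x,y)^{α₂} ) whenever d(x,y) ≥ 1. -/

import Mathlib

/-!
Write `r = d(x, y)` and `R = r ^ β`. On the window `R / 2 < u ≤ R` the lower heat kernel bound
gives `q(u, x, y) ≳ 1 / V(x, r)`, and `ν` is decreasing with `ν(R) = R ^ (-1 - γ)` (`γ = γ₁` if
`r ≤ 1`, `γ = γ₂` if `r ≥ 1`), so `J(x, y) ≳ R ^ (-γ) / V(x, r)`.
Conversely `ν(u) ≤ u ^ (-1 - γ)` for both exponents. For `u ≥ R` the upper heat kernel bound gives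
`q ≲ 1 / V(x, r)`; for `u ≤ R` volume doubling costs a power of `R / u`, which the Gaussian factor
absorbs, leaving `q ≲ (u / R) ^ δ / V(x, r)` with `δ > γ`. Integrating
`min 1 ((u / R) ^ δ) * u ^ (-1 - γ)` gives a multiple of `R ^ (-γ) = r ^ (-α)`.
-/

open MeasureTheory Set Real Metric
open scoped Nat

structure IsDoublingFunction (C : ℝ) (f : ℝ → ℝ) : Prop where
  pos : ∀ r, 0 < r → 0 < f r
  monotoneOn : MonotoneOn f (Ioi 0)
  le_mul : ∀ r, 0 < r → f (2 * r) ≤ C * f r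

namespace IsDoublingFunction

variable {C : ℝ} {f : ℝ → ℝ}

theorem one_le (hf : IsDoublingFunction C f) : 1 ≤ C := by
  have h1 := hf.pos 1 one_pos
  have h2 : f 1 ≤ f (2 * 1) := hf.monotoneOn (mem_Ioi.2 one_pos) (by norm_num) (by norm_num)
  nlinarith [hf.le_mul 1 one_pos]

theorem le_two_pow_mul (hf : IsDoublingFunction C f) {s : ℝ} (hs : 0 < s) (k : ℕ) :
    f (2 ^ k * s) ≤ C ^ k * f s := by
  induction k with
  | zero => simp
  | succ k ih =>
    calc f (2 ^ (k + 1) * s) = f (2 * (2 ^ k * s)) := by ring_nf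
      _ ≤ C * f (2 ^ k * s) := hf.le_mul _ (by positivity)
      _ ≤ C * (C ^ k * f s) := by gcongr; linarith [hf.one_le]
      _ = C ^ (k + 1) * f s := by ring

theorem le_mul_rpow (hf : IsDoublingFunction C f) {s t : ℝ} (hs : 0 < s) (hst : s ≤ t) :
    f t ≤ C * (t / s) ^ logb 2 C * f s := by
  have hC : 0 < C := zero_lt_one.trans_le hf.one_le
  have hts : 1 ≤ t / s := (one_le_div hs).mpr hst
  set θ := logb 2 C
  set L := logb 2 (t / s)
  have hθ : 0 ≤ θ := logb_nonneg one_lt_two hf.one_le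
  have hCθ : (2 : ℝ) ^ θ = C := rpow_logb two_pos (by norm_num) hC
  have htsL : (2 : ℝ) ^ L = t / s := rpow_logb two_pos (by norm_num) (by linarith)
  set k := ⌈L⌉₊
  have ht : t ≤ 2 ^ k * s := by
    rw [← div_le_iff₀ hs, ← rpow_natCast, ← htsL]
    exact rpow_le_rpow_of_exponent_le one_le_two (Nat.le_ceil _)
  have hCk : C ^ k ≤ C * (t / s) ^ θ := by
    have hk : (k : ℝ) ≤ L + 1 := (Nat.ceil_lt_add_one (logb_nonneg one_lt_two hts)).le
    calc C ^ k = (2 : ℝ) ^ (θ * k) := by rw [rpow_mul zero_le_two, hCθ, rpow_natCast]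
      _ ≤ (2 : ℝ) ^ (θ * (L + 1)) := by gcongr; norm_num
      _ = C * (t / s) ^ θ := by
        rw [mul_add_one, rpow_add two_pos, mul_comm θ L, rpow_mul zero_le_two, hCθ, htsL, mul_comm]
  calc f t ≤ f (2 ^ k * s) := hf.monotoneOn (hs.trans_le hst) (by simp; positivity) ht
    _ ≤ C ^ k * f s := hf.le_two_pow_mul hs k
    _ ≤ C * (t / s) ^ θ * f s := by gcongr; exact (hf.pos s hs).le

theorem one_div_le_mul_rpow (hf : IsDoublingFunction C f) {β u R : ℝ} (hβ : 0 < β)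
    (hu : 0 < u) (huR : u ≤ R) :
    1 / f (u ^ (1 / β)) ≤ C * (R / u) ^ (logb 2 C / β) / f (R ^ (1 / β)) := by
  have hw : 0 < u ^ (1 / β) := rpow_pos_of_pos hu _
  have hR : 0 < R := hu.trans_le huR
  have hgrowth := hf.le_mul_rpow hw (rpow_le_rpow hu.le huR (one_div_nonneg.2 hβ.le))
  rw [← div_rpow hR.le hu.le, ← rpow_mul (div_pos hR hu).le, one_div_mul_eq_div]
    at hgrowth
  rw [div_le_div_iff₀ (hf.pos _ hw) (hf.pos _ (rpow_pos_of_pos hR _)), one_mul]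
  exact hgrowth

theorem of_measure_ball {M : Type*} [PseudoMetricSpace M]
    [MeasurableSpace M] {μ : Measure M} {x : M} {C : ℝ} {V : ℝ → ℝ}
    (hV : ∀ r, V r = (μ (ball x r)).toReal) (hfin : ∀ r, 0 < r → μ (ball x r) < ⊤)
    (hpos : ∀ r, 0 < r → 0 < μ (ball x r)) (hD : ∀ r, 0 < r → V (2 * r) ≤ C * V r) :
    IsDoublingFunction C V where
  pos r hr := by
    rw [hV]; exact ENNReal.toReal_pos (hpos r hr).ne' (hfin r hr).ne
  monotoneOn s _ t ht hst := by
    rw [hV, hV]; exact ENNReal.toReal_mono (hfin t ht).ne (measure_mono (ball_subset_ball hst))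
  le_mul := hD

end IsDoublingFunction

theorem exp_neg_mul_rpow_le {c t : ℝ} (hc : 0 < c) (ht : 0 < t) (p : ℝ) (n : ℕ) :
    exp (-(c * t ^ p)) ≤ n ! / c ^ n * t ^ (-(p * n)) := by
  have hs : 0 < c * t ^ p := by positivity
  have hexp := Real.pow_div_factorial_le_exp _ hs.le n
  rw [exp_neg, rpow_neg ht.le, rpow_mul ht.le, rpow_natCast, ← div_eq_mul_inv, div_div,
    ← mul_pow, ← one_div, div_le_div_iff₀ (exp_pos _) (by positivity), one_mul]
  rwa [div_le_iff₀ (by positivity), mul_comm (exp _)] at hexp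

/-- Volume doubling only costs a power of `R / u`, which the Gaussian factor absorbs. -/
theorem exists_one_div_mul_exp_neg_le {C β c δ : ℝ} (hβ : 1 < β) (hc : 0 < c) (hδ : 0 ≤ δ) :
    ∃ K > 0, ∀ f : ℝ → ℝ, IsDoublingFunction C f → ∀ u R : ℝ, 0 < u → 0 < R →
      1 / f (u ^ (1 / β)) * exp (-(c * (R / u) ^ (1 / (β - 1)))) ≤
        K / f (R ^ (1 / β)) * min 1 ((u / R) ^ δ) := by
  set θ := logb 2 C
  set n := ⌈(β - 1) * (δ + θ / β)⌉₊
  have hn : δ + θ / β ≤ n / (β - 1) := by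
    rw [le_div_iff₀ (by linarith), mul_comm]; exact Nat.le_ceil _
  refine ⟨max 1 (C * (n ! / c ^ n)), by positivity, fun f hf u R hu hR => ?_⟩
  have hfR := hf.pos _ (rpow_pos_of_pos hR (1 / β))
  rcases le_total u R with huR | hRu
  · have hRu : 1 ≤ R / u := (one_le_div hu).mpr huR
    rw [min_eq_right (rpow_le_one (by positivity) ((div_le_one hR).mpr huR) hδ)]
    calc 1 / f (u ^ (1 / β)) * exp (-(c * (R / u) ^ (1 / (β - 1))))
        ≤ C * (R / u) ^ (θ / β) / f (R ^ (1 / β)) *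
            (n ! / c ^ n * (R / u) ^ (-(1 / (β - 1) * n))) := by
          refine mul_le_mul (hf.one_div_le_mul_rpow (by linarith) hu huR)
            (exp_neg_mul_rpow_le hc (by positivity) _ n) (exp_pos _).le
              (by have := hf.one_le; positivity)
      _ = C * (n ! / c ^ n) / f (R ^ (1 / β)) * (R / u) ^ (θ / β - n / (β - 1)) := by
          rw [rpow_sub (by positivity), rpow_neg (by positivity)]
          field_simp
      _ ≤ max 1 (C * (n ! / c ^ n)) / f (R ^ (1 / β)) * (R / u) ^ (-δ) := by
          gcongr
          · exact le_max_right _ _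
          · linarith
      _ = max 1 (C * (n ! / c ^ n)) / f (R ^ (1 / β)) * (u / R) ^ δ := by
          rw [rpow_neg (by positivity), ← inv_rpow (by positivity), inv_div]
  · rw [min_eq_left (one_le_rpow ((one_le_div hR).mpr hRu) hδ), mul_one]
    calc 1 / f (u ^ (1 / β)) * exp (-(c * (R / u) ^ (1 / (β - 1))))
        ≤ 1 / f (R ^ (1 / β)) * 1 := by
          gcongr
          · exact hf.monotoneOn (by simp; positivity) (by simp; positivity)
              (rpow_le_rpow hR.le hRu (by positivity))
          · rw [exp_le_one_iff, neg_nonpos]; positivity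
      _ ≤ max 1 (C * (n ! / c ^ n)) / f (R ^ (1 / β)) := by
          rw [mul_one]; gcongr; exact le_max_left _ _

noncomputable def levyDensity (γ₁ γ₂ s : ℝ) : ℝ := if s ≤ 1 then s ^ (-1 - γ₁) else s ^ (-1 - γ₂)

section LevyDensity

variable {γ₁ γ₂ s : ℝ}

theorem measurable_levyDensity : Measurable (levyDensity γ₁ γ₂) :=
  Measurable.ite (measurableSet_le measurable_id measurable_const)
    (measurable_id.pow_const _) (measurable_id.pow_const _)

theorem levyDensity_nonneg (hs : 0 ≤ s) : 0 ≤ levyDensity γ₁ γ₂ s := by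
  unfold levyDensity; split_ifs <;> exact rpow_nonneg hs _

theorem levyDensity_of_le_one (hs : s ≤ 1) : levyDensity γ₁ γ₂ s = s ^ (-1 - γ₁) := if_pos hs

theorem levyDensity_of_one_le (hs : 1 ≤ s) : levyDensity γ₁ γ₂ s = s ^ (-1 - γ₂) := by
  rcases hs.eq_or_lt with rfl | hs
  · simp [levyDensity]
  · exact if_neg hs.not_ge

theorem levyDensity_le_rpow_left (hγ : γ₁ ≤ γ₂) :
    levyDensity γ₁ γ₂ s ≤ s ^ (-1 - γ₁) := by
  unfold levyDensity
  split_ifs with h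
  · exact le_rfl
  · exact rpow_le_rpow_of_exponent_le (not_le.1 h).le (by linarith)

theorem levyDensity_le_rpow_right (hγ : γ₁ ≤ γ₂) (hs : 0 < s) :
    levyDensity γ₁ γ₂ s ≤ s ^ (-1 - γ₂) := by
  unfold levyDensity
  split_ifs with h
  · exact rpow_le_rpow_of_exponent_ge hs h (by linarith)
  · exact le_rfl

theorem antitoneOn_levyDensity (h₁ : -1 ≤ γ₁) (h₂ : -1 ≤ γ₂) :
    AntitoneOn (levyDensity γ₁ γ₂) (Ioi 0) := by
  intro a ha b hb hab
  unfold levyDensity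
  split_ifs with hb1 ha1 ha1
  · exact rpow_le_rpow_of_nonpos ha hab (by linarith)
  · exact absurd (hab.trans hb1) ha1
  · exact (rpow_le_one_of_one_le_of_nonpos (not_le.1 hb1).le (by linarith)).trans
      (one_le_rpow_of_pos_of_le_one_of_nonpos ha ha1 (by linarith))
  · exact rpow_le_rpow_of_nonpos (zero_lt_one.trans (not_le.1 ha1)) hab (by linarith)

end LevyDensity

section MinRpow

variable {R γ δ : ℝ}

theorem min_rpow_mul_rpow_eqOn_Ioc (hR : 0 < R) (hδ : 0 ≤ δ) :
    EqOn (fun u => min 1 ((u / R) ^ δ) * u ^ (-1 - γ)) (fun u => R ^ (-δ) * u ^ (δ - 1 - γ))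
      (Ioc 0 R) := by
  intro u ⟨hu, huR⟩
  simp only
  rw [min_eq_right (rpow_le_one (by positivity) ((div_le_one hR).2 huR) hδ),
    div_rpow hu.le hR.le, rpow_neg hR.le, show δ - 1 - γ = δ + (-1 - γ) by ring, rpow_add hu]
  ring

theorem min_rpow_mul_rpow_eqOn_Ioi (hR : 0 < R) (hδ : 0 ≤ δ) :
    EqOn (fun u => min 1 ((u / R) ^ δ) * u ^ (-1 - γ)) (fun u => u ^ (-1 - γ)) (Ioi R) := by
  intro u hu
  simp only
  rw [min_eq_left (one_le_rpow ((one_le_div hR).2 (le_of_lt hu)) hδ), one_mul]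

theorem integrableOn_min_rpow_mul_rpow (hR : 0 < R) (hγ : 0 < γ) (hγδ : γ < δ) :
    IntegrableOn (fun u => min 1 ((u / R) ^ δ) * u ^ (-1 - γ)) (Ioi 0) := by
  rw [← Ioc_union_Ioi_eq_Ioi hR.le]
  refine IntegrableOn.union ?_ ?_
  · refine IntegrableOn.congr_fun ?_ (min_rpow_mul_rpow_eqOn_Ioc hR (by linarith)).symm
      measurableSet_Ioc
    exact (intervalIntegral.intervalIntegrable_rpow' (by linarith)).1.const_mul _
  · exact (integrableOn_Ioi_rpow_of_lt (by linarith) hR).congr_fun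
      (min_rpow_mul_rpow_eqOn_Ioi hR (by linarith)).symm measurableSet_Ioi

theorem setIntegral_min_rpow_mul_rpow (hR : 0 < R) (hγ : 0 < γ) (hγδ : γ < δ) :
    ∫ u in Ioi 0, min 1 ((u / R) ^ δ) * u ^ (-1 - γ) = R ^ (-γ) * (1 / (δ - γ) + 1 / γ) := by
  have hint := integrableOn_min_rpow_mul_rpow hR hγ hγδ
  rw [← Ioc_union_Ioi_eq_Ioi hR.le] at hint ⊢
  rw [setIntegral_union (Ioc_disjoint_Ioi le_rfl) measurableSet_Ioi
      (hint.mono_set subset_union_left) (hint.mono_set subset_union_right),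
    setIntegral_congr_fun measurableSet_Ioc (min_rpow_mul_rpow_eqOn_Ioc hR (by linarith)),
    setIntegral_congr_fun measurableSet_Ioi (min_rpow_mul_rpow_eqOn_Ioi hR (by linarith)),
    integral_const_mul, ← intervalIntegral.integral_of_le hR.le, integral_rpow (by left; linarith),
    integral_Ioi_rpow_of_lt (by linarith) hR, zero_rpow (by linarith),
    show δ - 1 - γ + 1 = δ - γ by ring, show -1 - γ + 1 = -γ by ring, sub_zero,
    rpow_sub hR, rpow_neg hR.le, rpow_neg hR.le]
  have : δ - γ ≠ 0 := by linarith
  field_simp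

end MinRpow

theorem mul_le_setIntegral_of_le_on_Ioc {g : ℝ → ℝ} {s : Set ℝ} {a b c : ℝ} (hab : a ≤ b)
    (hs : MeasurableSet s) (hsub : Ioc a b ⊆ s) (hg : IntegrableOn g s)
    (hg0 : ∀ u ∈ s, 0 ≤ g u) (hc : ∀ u ∈ Ioc a b, c ≤ g u) :
    (b - a) * c ≤ ∫ u in s, g u :=
  calc (b - a) * c = ∫ _ in Ioc a b, c := by
        rw [setIntegral_const, volume_real_Ioc_of_le hab, smul_eq_mul]
    _ ≤ ∫ u in Ioc a b, g u :=
        setIntegral_mono_on (integrableOn_const measure_Ioc_lt_top.ne) (hg.mono_set hsub)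
          measurableSet_Ioc hc
    _ ≤ ∫ u in s, g u :=
        setIntegral_mono_set hg ((ae_restrict_iff' hs).2 (ae_of_all _ hg0)) hsub.eventuallyLE

theorem one_div_mul_exp_neg_le_of_mem_Ioc {f : ℝ → ℝ} (hf : MonotoneOn f (Ioi 0))
    (hfpos : ∀ r, 0 < r → 0 < f r) {β c u R : ℝ} (hβ : 1 < β) (hc : 0 ≤ c)
    (hu : u ∈ Ioc (R / 2) R) :
    1 / f (R ^ (1 / β)) * exp (-(c * 2 ^ (1 / (β - 1)))) ≤
      1 / f (u ^ (1 / β)) * exp (-(c * (R / u) ^ (1 / (β - 1)))) := by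
  obtain ⟨hu2, huR⟩ := hu
  have hR : 0 < R := by linarith
  have hu0 : 0 < u := by linarith
  have hfu := hfpos _ (rpow_pos_of_pos hu0 (1 / β))
  have hRu : R / u ≤ 2 := by rw [div_le_iff₀ hu0]; linarith
  refine mul_le_mul (one_div_le_one_div_of_le hfu ?_) ?_ (exp_pos _).le (by positivity)
  · exact hf (by simp; positivity) (by simp; positivity) (rpow_le_rpow hu0.le huR (by positivity))
  · gcongr

theorem le_setIntegral_mul_of_le_gaussian {f F ν : ℝ → ℝ} {β c₁ c₂ R : ℝ} (hβ : 1 < β)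
    (hc₁ : 0 ≤ c₁) (hc₂ : 0 ≤ c₂) (hR : 0 < R) (hf : MonotoneOn f (Ioi 0))
    (hfpos : ∀ r, 0 < r → 0 < f r) (hν0 : ∀ u, 0 < u → 0 ≤ ν u) (hνanti : AntitoneOn ν (Ioi 0))
    (hint : IntegrableOn (fun u => F u * ν u) (Ioi 0)) (hF0 : ∀ u ∈ Ioi 0, 0 ≤ F u * ν u)
    (hF : ∀ u, 0 < u → c₁ * (1 / f (u ^ (1 / β))) * exp (-(c₂ * (R / u) ^ (1 / (β - 1)))) ≤ F u) :
    c₁ * exp (-(c₂ * 2 ^ (1 / (β - 1)))) / 2 * R * ν R / f (R ^ (1 / β)) ≤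
      ∫ u in Ioi 0, F u * ν u := by
  set E := exp (-(c₂ * 2 ^ (1 / (β - 1))))
  have hlow : ∀ u ∈ Ioc (R / 2) R, c₁ * (1 / f (R ^ (1 / β)) * E) * ν R ≤ F u * ν u := by
    intro u hu
    have hu0 : 0 < u := (half_pos hR).trans hu.1
    have := hfpos _ (rpow_pos_of_pos hu0 (1 / β))
    calc c₁ * (1 / f (R ^ (1 / β)) * E) * ν R
        ≤ c₁ * (1 / f (u ^ (1 / β)) * exp (-(c₂ * (R / u) ^ (1 / (β - 1))))) * ν u :=
          mul_le_mul (mul_le_mul_of_nonneg_left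
            (one_div_mul_exp_neg_le_of_mem_Ioc hf hfpos hβ hc₂ hu) hc₁)
            (hνanti hu0 hR hu.2) (hν0 R hR) (by positivity)
      _ ≤ F u * ν u := by
          rw [← mul_assoc]
          exact mul_le_mul_of_nonneg_right (hF u hu0) (hν0 u hu0)
  calc c₁ * E / 2 * R * ν R / f (R ^ (1 / β))
      = (R - R / 2) * (c₁ * (1 / f (R ^ (1 / β)) * E) * ν R) := by
        field_simp
        ring
    _ ≤ ∫ u in Ioi 0, F u * ν u :=
        mul_le_setIntegral_of_le_on_Ioc (by linarith) measurableSet_Ioi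
          (fun u hu => (half_pos hR).trans hu.1) hint hF0 hlow

theorem integrableOn_mul_and_setIntegral_le_of_le_gaussian {f F ν : ℝ → ℝ}
    {β c₃ c₄ γ δ K R : ℝ} (hc₃ : 0 ≤ c₃) (hγ : 0 < γ) (hγδ : γ < δ) (hR : 0 < R)
    (hfpos : ∀ r, 0 < r → 0 < f r) (hFm : Measurable F) (hν : Measurable ν)
    (hν0 : ∀ u, 0 < u → 0 ≤ ν u) (hνle : ∀ u, 0 < u → ν u ≤ u ^ (-1 - γ))
    (hgauss : ∀ u, 0 < u → 1 / f (u ^ (1 / β)) * exp (-(c₄ * (R / u) ^ (1 / (β - 1)))) ≤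
      K / f (R ^ (1 / β)) * min 1 ((u / R) ^ δ))
    (hF0 : ∀ u ∈ Ioi 0, 0 ≤ F u * ν u)
    (hF : ∀ u, 0 < u → F u ≤ c₃ * (1 / f (u ^ (1 / β))) * exp (-(c₄ * (R / u) ^ (1 / (β - 1))))) :
    IntegrableOn (fun u => F u * ν u) (Ioi 0) ∧
      ∫ u in Ioi 0, F u * ν u ≤
        c₃ * K / f (R ^ (1 / β)) * (R ^ (-γ) * (1 / (δ - γ) + 1 / γ)) := by
  set A := c₃ * K / f (R ^ (1 / β))
  have hFle : ∀ u ∈ Ioi 0, F u * ν u ≤ A * (min 1 ((u / R) ^ δ) * u ^ (-1 - γ)) := by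
    intro u (hu : 0 < u)
    have := hfpos _ (rpow_pos_of_pos hu (1 / β))
    calc F u * ν u
        ≤ c₃ * (1 / f (u ^ (1 / β)) * exp (-(c₄ * (R / u) ^ (1 / (β - 1))))) * u ^ (-1 - γ) := by
          rw [← mul_assoc]
          exact mul_le_mul (hF u hu) (hνle u hu) (hν0 u hu) (by positivity)
      _ ≤ c₃ * (K / f (R ^ (1 / β)) * min 1 ((u / R) ^ δ)) * u ^ (-1 - γ) :=
          mul_le_mul_of_nonneg_right (mul_le_mul_of_nonneg_left (hgauss u hu) hc₃)
            (rpow_nonneg hu.le _)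
      _ = A * (min 1 ((u / R) ^ δ) * u ^ (-1 - γ)) := by ring
  have hmajorant := (integrableOn_min_rpow_mul_rpow hR hγ hγδ).const_mul A
  have hint : IntegrableOn (fun u => F u * ν u) (Ioi 0) := by
    refine hmajorant.mono' (hFm.mul hν).aestronglyMeasurable ?_
    filter_upwards [ae_restrict_mem measurableSet_Ioi] with u hu
    rw [norm_of_nonneg (hF0 u hu)]
    exact hFle u hu
  refine ⟨hint, ?_⟩
  calc ∫ u in Ioi 0, F u * ν u
      ≤ ∫ u in Ioi 0, A * (min 1 ((u / R) ^ δ) * u ^ (-1 - γ)) :=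
        setIntegral_mono_on hint hmajorant measurableSet_Ioi hFle
    _ = A * (R ^ (-γ) * (1 / (δ - γ) + 1 / γ)) := by
        rw [integral_const_mul, setIntegral_min_rpow_mul_rpow hR hγ hγδ]

theorem exists_le_setIntegral_mul_le {C β c₁ c₂ c₃ c₄ γ : ℝ} {ν : ℝ → ℝ} (hβ : 1 < β)
    (hc₁ : 0 < c₁) (hc₂ : 0 ≤ c₂) (hc₃ : 0 < c₃) (hc₄ : 0 < c₄) (hγ : 0 < γ)
    (hν : Measurable ν) (hν0 : ∀ u, 0 < u → 0 ≤ ν u) (hνle : ∀ u, 0 < u → ν u ≤ u ^ (-1 - γ))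
    (hνanti : AntitoneOn ν (Ioi 0)) :
    ∃ C₁ C₂ : ℝ, 0 < C₁ ∧ 0 < C₂ ∧ ∀ (f F : ℝ → ℝ) (r : ℝ), IsDoublingFunction C f →
      Measurable F → 0 < r → ν (r ^ β) = (r ^ β) ^ (-1 - γ) →
      (∀ u, 0 < u →
        c₁ * (1 / f (u ^ (1 / β))) * exp (-(c₂ * (r ^ β / u) ^ (1 / (β - 1)))) ≤ F u ∧
        F u ≤ c₃ * (1 / f (u ^ (1 / β))) * exp (-(c₄ * (r ^ β / u) ^ (1 / (β - 1))))) →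
      C₁ / (f r * r ^ (γ * β)) ≤ ∫ u in Ioi 0, F u * ν u ∧
        ∫ u in Ioi 0, F u * ν u ≤ C₂ / (f r * r ^ (γ * β)) := by
  obtain ⟨K, hK, hgauss⟩ := exists_one_div_mul_exp_neg_le (C := C) hβ hc₄ (δ := γ + 1)
    (by linarith)
  refine ⟨c₁ * exp (-(c₂ * 2 ^ (1 / (β - 1)))) / 2, c₃ * K * (1 + 1 / γ), by positivity,
    by positivity, ?_⟩
  intro f F r hf hFm hr hνR hF
  set R := r ^ β
  have hR : 0 < R := by positivity
  have hRr : R ^ (1 / β) = r := by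
    rw [← rpow_mul hr.le, mul_one_div_cancel (by linarith), rpow_one]
  have hrγβ : r ^ (γ * β) = R ^ γ := by rw [mul_comm, rpow_mul hr.le]
  have hF0 : ∀ u ∈ Ioi 0, 0 ≤ F u * ν u := by
    intro u (hu : 0 < u)
    have := hf.pos _ (rpow_pos_of_pos hu (1 / β))
    exact mul_nonneg ((hF u hu).1.trans' (by positivity)) (hν0 u hu)
  obtain ⟨hint, hupper⟩ := integrableOn_mul_and_setIntegral_le_of_le_gaussian hc₃.le hγ
    (lt_add_one γ) hR hf.pos hFm hν hν0 hνle (fun u hu => hgauss f hf u R hu hR) hF0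
    fun u hu => (hF u hu).2
  have hlower := le_setIntegral_mul_of_le_gaussian hβ hc₁.le hc₂ hR hf.monotoneOn hf.pos hν0
    hνanti hint hF0 fun u hu => (hF u hu).1
  rw [hRr, add_sub_cancel_left, div_one] at hupper
  rw [hRr, hνR] at hlower
  constructor
  · convert hlower using 1
    rw [hrγβ, rpow_sub hR, rpow_neg_one]
    field_simp
  · convert hupper using 1
    rw [hrγβ, rpow_neg hR.le]
    field_simp

theorem stmt_16_general {M : Type*} [MetricSpace M] [MeasurableSpace M]
    (μ : Measure M) (V : M → ℝ → ℝ)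
    (hV : ∀ x r, V x r = (μ (ball x r)).toReal)
    (hfin : ∀ (x : M) (r : ℝ), 0 < r → μ (ball x r) < ⊤)
    (hpos : ∀ (x : M) (r : ℝ), 0 < r → 0 < μ (ball x r))
    (Cμ : ℝ)
    (hVD : ∀ (x : M) (r : ℝ), 0 < r → V x (2 * r) ≤ Cμ * V x r)
    (β γ₁ γ₂ : ℝ) (hβ : 2 ≤ β) (hγ₁ : 0 < γ₁) (hγ₁' : γ₁ < 1) (hγ₂ : 1 < γ₂)
    (α₁ α₂ : ℝ) (hα₁ : α₁ = γ₁ * β) (hα₂ : α₂ = γ₂ * β)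
    (ν : ℝ → ℝ)
    (hν : ∀ s : ℝ, 0 < s → ν s = if s ≤ 1 then s ^ (-1 - γ₁) else s ^ (-1 - γ₂))
    (q : ℝ → M → M → ℝ)
    (hqmeas : Measurable (fun p : ℝ × M × M => q p.1 p.2.1 p.2.2))
    (c₁ c₂ c₃ c₄ : ℝ) (hc₁ : 0 < c₁) (hc₂ : 0 < c₂) (hc₃ : 0 < c₃) (hc₄ : 0 < c₄)
    (hq : ∀ (u : ℝ) (x y : M), 0 < u →
      c₁ * (1 / V x (u ^ (1 / β))) *
          Real.exp (-(c₂ * (dist x y ^ β / u) ^ (1 / (β - 1)))) ≤ q u x y ∧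
      q u x y ≤ c₃ * (1 / V x (u ^ (1 / β))) *
          Real.exp (-(c₄ * (dist x y ^ β / u) ^ (1 / (β - 1)))))
    (J : M → M → ℝ)
    (hJ : ∀ x y : M, x ≠ y → J x y = ∫ u in Ioi (0 : ℝ), q u x y * ν u) :
    ∃ C₁ C₂ : ℝ, 0 < C₁ ∧ 0 < C₂ ∧ ∀ x y : M,
      (0 < dist x y → dist x y ≤ 1 →
        C₁ / (V x (dist x y) * dist x y ^ α₁) ≤ J x y ∧
        J x y ≤ C₂ / (V x (dist x y) * dist x y ^ α₁)) ∧
      (1 ≤ dist x y →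
        C₁ / (V x (dist x y) * dist x y ^ α₂) ≤ J x y ∧
        J x y ≤ C₂ / (V x (dist x y) * dist x y ^ α₂)) := by
  have hγ : γ₁ ≤ γ₂ := by linarith
  have hdoubling x : IsDoublingFunction Cμ (V x) :=
    .of_measure_ball (hV x) (hfin x) (hpos x) (hVD x)
  have hJ' x y (hxy : x ≠ y) : J x y = ∫ u in Ioi 0, q u x y * levyDensity γ₁ γ₂ u :=
    (hJ x y hxy).trans (setIntegral_congr_fun measurableSet_Ioi fun u hu => by
      rw [hν u hu, levyDensity])
  have hqm x y : Measurable fun u => q u x y :=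
    hqmeas.comp (measurable_id.prodMk (measurable_const (a := (x, y))))
  obtain ⟨A₁, B₁, hA₁, hB₁, h₁⟩ := exists_le_setIntegral_mul_le (C := Cμ) (β := β) (by linarith) hc₁
    hc₂.le hc₃ hc₄ hγ₁ measurable_levyDensity (fun u hu => levyDensity_nonneg hu.le)
    (fun u _ => levyDensity_le_rpow_left hγ) (antitoneOn_levyDensity (by linarith) (by linarith))
  obtain ⟨A₂, B₂, hA₂, hB₂, h₂⟩ := exists_le_setIntegral_mul_le (C := Cμ) (β := β) (by linarith) hc₁
    hc₂.le hc₃ hc₄ (by linarith) measurable_levyDensity (fun u hu => levyDensity_nonneg hu.le)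
    (fun u hu => levyDensity_le_rpow_right hγ hu)
    (antitoneOn_levyDensity (by linarith) (by linarith))
  subst hα₁ hα₂
  refine ⟨min A₁ A₂, max B₁ B₂, lt_min hA₁ hA₂, lt_max_of_lt_left hB₁,
    fun x y => ⟨fun hr hr1 => ?_, fun hr1 => ?_⟩⟩
  · obtain ⟨hlo, hup⟩ := h₁ (V x) _ _ (hdoubling x) (hqm x y) hr
      (levyDensity_of_le_one (rpow_le_one hr.le hr1 (by linarith))) (hq · x y)
    have hden := mul_pos ((hdoubling x).pos _ hr) (rpow_pos_of_pos hr (γ₁ * β))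
    rw [hJ' x y (dist_pos.1 hr)]
    exact ⟨hlo.trans' (div_le_div_of_nonneg_right (min_le_left _ _) hden.le),
      hup.trans (div_le_div_of_nonneg_right (le_max_left _ _) hden.le)⟩
  · have hr : 0 < dist x y := one_pos.trans_le hr1
    obtain ⟨hlo, hup⟩ := h₂ (V x) _ _ (hdoubling x) (hqm x y) hr
      (levyDensity_of_one_le (one_le_rpow hr1 (by linarith))) (hq · x y)
    have hden := mul_pos ((hdoubling x).pos _ hr) (rpow_pos_of_pos hr (γ₂ * β))
    rw [hJ' x y (dist_pos.1 hr)]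
    exact ⟨hlo.trans' (div_le_div_of_nonneg_right (min_le_right _ _) hden.le),
      hup.trans (div_le_div_of_nonneg_right (le_max_right _ _) hden.le)⟩

/-- Claim 1(i) of Example 1.1: two-sided bounds for the jumping kernel
`J(x,y) = ∫₀^∞ q(u,x,y) ν(u) du` of the subordinate process. -/
theorem stmt_16 {M : Type*} [MetricSpace M] [MeasurableSpace M] [BorelSpace M]
    (μ : Measure M) (V : M → ℝ → ℝ)
    (hV : ∀ x r, V x r = (μ (ball x r)).toReal)
    (hfin : ∀ (x : M) (r : ℝ), 0 < r → μ (ball x r) < ⊤)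
    (hpos : ∀ (x : M) (r : ℝ), 0 < r → 0 < μ (ball x r))
    (Cμ : ℝ) (hCμ : 0 < Cμ)
    (hVD : ∀ (x : M) (r : ℝ), 0 < r → V x (2 * r) ≤ Cμ * V x r)
    (β γ₁ γ₂ : ℝ) (hβ : 2 ≤ β) (hγ₁ : 0 < γ₁) (hγ₁' : γ₁ < 1) (hγ₂ : 1 < γ₂)
    (α₁ α₂ : ℝ) (hα₁ : α₁ = γ₁ * β) (hα₂ : α₂ = γ₂ * β)
    (ν : ℝ → ℝ)
    (hν : ∀ s : ℝ, 0 < s → ν s = if s ≤ 1 then s ^ (-1 - γ₁) else s ^ (-1 - γ₂))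
    (q : ℝ → M → M → ℝ)
    (hqmeas : Measurable (fun p : ℝ × M × M => q p.1 p.2.1 p.2.2))
    (c₁ c₂ c₃ c₄ : ℝ) (hc₁ : 0 < c₁) (hc₂ : 0 < c₂) (hc₃ : 0 < c₃) (hc₄ : 0 < c₄)
    (hq : ∀ (u : ℝ) (x y : M), 0 < u →
      c₁ * (1 / V x (u ^ (1 / β))) *
          Real.exp (-(c₂ * (dist x y ^ β / u) ^ (1 / (β - 1)))) ≤ q u x y ∧
      q u x y ≤ c₃ * (1 / V x (u ^ (1 / β))) *
          Real.exp (-(c₄ * (dist x y ^ β / u) ^ (1 / (β - 1)))))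
    (J : M → M → ℝ)
    (hJ : ∀ x y : M, x ≠ y → J x y = ∫ u in Ioi (0 : ℝ), q u x y * ν u) :
    ∃ C₁ C₂ : ℝ, 0 < C₁ ∧ 0 < C₂ ∧ ∀ x y : M,
      (0 < dist x y → dist x y ≤ 1 →
        C₁ / (V x (dist x y) * dist x y ^ α₁) ≤ J x y ∧
        J x y ≤ C₂ / (V x (dist x y) * dist x y ^ α₁)) ∧
      (1 ≤ dist x y →
        C₁ / (V x (dist x y) * dist x y ^ α₂) ≤ J x y ∧
        J x y ≤ C₂ / (V x (dist x y) * dist x y ^ α₂)) :=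
  stmt_16_general μ V hV hfin hpos Cμ hVD β γ₁ γ₂ hβ hγ₁ hγ₁' hγ₂ α₁ α₂ hα₁ hα₂ ν hν q hqmeas c₁ c₂
    c₃ c₄ hc₁ hc₂ hc₃ hc₄ hq J hJ
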